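/- arXiv:1703.00745 — 9 statements merged into one kernel-verified Lean document; each statement's English description precedes it below -/
import Mathlib

section
/- For every natural number t with t ≤ n, and every injective map k : Fin t → Fin n, the t × t matrix over L whose (i,j) entry is σ^j(α_{k(i)}) (for i, j ∈ Fin t) has nonzero determinant. -/
/-!
If the determinant vanished, a nonzero polynomial `p = ∑_{j<t} cⱼ Xʲ` would give an operator
`x ↦ ∑ cⱼ σʲ(x)` killing the `t` elements `α (k i)`, which are independent over the fixed field
`K`. An operator of this shape of degree `d` kills at most `d` independent elements `βᵢ`:
twisting the coefficients to `cⱼ σʲ(β₀)` makes `1` a root, so the twisted polynomial is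
`g * (X - 1)` and its operator factors through `σ - 1`, whose kernel is `K`. The images
`(σ - 1)(βᵢ / β₀)`, `i ≠ 0`, stay independent and are killed by `g`, of degree `d - 1`;
conclude by induction.
-/

/-- The fixed subfield `L^σ` of a field automorphism `σ`. -/
def fixedSubfield {L : Type*} [Field L] (σ : L ≃+* L) : Subfield L where
  carrier := {x | σ x = x}
  mul_mem' := by intro a b ha hb; simp only [Set.mem_setOf_eq] at *; rw [map_mul, ha, hb]
  one_mem' := by simp
  add_mem' := by intro a b ha hb; simp only [Set.mem_setOf_eq] at *; rw [map_add, ha, hb]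
  zero_mem' := by simp
  neg_mem' := by intro a ha; simp only [Set.mem_setOf_eq] at *; rw [map_neg, ha]
  inv_mem' := by intro a ha; simp only [Set.mem_setOf_eq] at *; rw [map_inv₀, ha]

open Polynomial

section LinearizedPolynomial

variable {L : Type*} [Field L] (σ : L ≃+* L)

/-- `∑ aⱼ Xʲ` acts on `L` as the operator `∑ aⱼ σʲ`. Right multiplication by a polynomial with
coefficients in the fixed field is composition of operators (see `linearizedEval_mul_X_sub_one`). -/
noncomputable def linearizedEval (x : L) : L[X] →ₗ[L] L :=
  lsum fun j => LinearMap.mulRight L ((σ ^ j) x)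

noncomputable def twist (v : L) : L[X] →ₗ[L] L[X] :=
  lsum fun j => (monomial j).comp (LinearMap.mulRight L ((σ ^ j) v))

variable {σ}

@[simp]
lemma linearizedEval_monomial (x a : L) (j : ℕ) :
    linearizedEval σ x (monomial j a) = a * (σ ^ j) x := by
  simp [linearizedEval, lsum_apply, sum_monomial_index]

lemma linearizedEval_sub_left (x y : L) (p : L[X]) :
    linearizedEval σ (x - y) p = linearizedEval σ x p - linearizedEval σ y p := by
  induction p using Polynomial.induction_on' with
  | add p q hp hq => simp only [map_add, hp, hq]; ring
  | monomial j a => simp [mul_sub]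

lemma linearizedEval_mul_X (x : L) (p : L[X]) :
    linearizedEval σ x (p * X) = linearizedEval σ (σ x) p := by
  induction p using Polynomial.induction_on' with
  | add p q hp hq => rw [add_mul, map_add, map_add, hp, hq]
  | monomial j a => simp [monomial_mul_X, pow_succ]

lemma linearizedEval_mul_X_sub_one (x : L) (p : L[X]) :
    linearizedEval σ x (p * (X - 1)) = linearizedEval σ (σ x - x) p := by
  rw [mul_sub, mul_one, map_sub, linearizedEval_mul_X, linearizedEval_sub_left]

lemma linearizedEval_one (p : L[X]) : linearizedEval σ 1 p = p.eval 1 := by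
  simp [linearizedEval, lsum_apply, eval_eq_sum]

@[simp]
lemma coeff_twist (v : L) (p : L[X]) (j : ℕ) :
    (twist σ v p).coeff j = p.coeff j * (σ ^ j) v := by
  induction p using Polynomial.induction_on' with
  | add p q hp hq => simp only [map_add, coeff_add, hp, hq, add_mul]
  | monomial i a =>
    simp only [twist, lsum_apply, sum_monomial_index, LinearMap.comp_apply, map_zero,
      LinearMap.mulRight_apply, zero_mul, coeff_monomial]
    split_ifs with h <;> simp [h]

lemma linearizedEval_twist (x v : L) (p : L[X]) :
    linearizedEval σ x (twist σ v p) = linearizedEval σ (v * x) p := by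
  induction p using Polynomial.induction_on' with
  | add p q hp hq => rw [map_add, map_add, hp, hq, map_add]
  | monomial j a =>
    simp [twist, lsum_apply, sum_monomial_index, mul_assoc]

lemma twist_ne_zero {v : L} (hv : v ≠ 0) {p : L[X]} (hp : p ≠ 0) : twist σ v p ≠ 0 := by
  contrapose! hp
  ext j
  have hj := congr_arg (coeff · j) hp
  rw [coeff_twist, coeff_zero, mul_eq_zero] at hj
  exact hj.resolve_right ((_root_.map_ne_zero _).2 hv)

lemma natDegree_twist_le (v : L) (p : L[X]) : (twist σ v p).natDegree ≤ p.natDegree :=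
  natDegree_le_iff_coeff_eq_zero.2 fun j hj => by
    rw [coeff_twist, coeff_eq_zero_of_natDegree_lt hj, zero_mul]

variable (σ) in
def fixedSubfieldLinearMap : L →ₗ[fixedSubfield σ] L where
  toFun := σ
  map_add' := map_add σ
  map_smul' c x := by
    have hc : σ c = c := c.2
    simp [Subfield.smul_def, hc]

/-- The kernel of `σ - 1` is the fixed subfield, which meets the span of `y` only in `0`. -/
lemma linearIndependent_sub_of_finCons_one {m : ℕ} {y : Fin m → L}
    (hy : LinearIndependent (fixedSubfield σ) (Fin.cons 1 y : Fin (m + 1) → L)) :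
    LinearIndependent (fixedSubfield σ) fun i => σ (y i) - y i := by
  obtain ⟨hy, h1⟩ := linearIndependent_finCons.1 hy
  have hdisj : Disjoint (Submodule.span (fixedSubfield σ) (Set.range y))
      (LinearMap.ker (fixedSubfieldLinearMap σ - LinearMap.id)) := by
    rw [Submodule.disjoint_def]
    intro x hx hker
    have hfix : σ x = x := sub_eq_zero.1 hker
    by_contra hx0
    apply h1
    have hinv : (1 : L) = (⟨x, hfix⟩ : fixedSubfield σ)⁻¹ • x := by
      simp [Subfield.smul_def, hx0]
    rw [hinv]
    exact Submodule.smul_mem _ _ hx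
  have hfun : (fun i => σ (y i) - y i) =
      ⇑(fixedSubfieldLinearMap σ - LinearMap.id : L →ₗ[fixedSubfield σ] L) ∘ y := by
    ext; rfl
  rw [hfun]
  exact hy.map hdisj

theorem card_le_natDegree_of_linearIndependent {m : ℕ} {β : Fin m → L}
    (hβ : LinearIndependent (fixedSubfield σ) β) {p : L[X]} (hp : p ≠ 0)
    (hroot : ∀ i, linearizedEval σ (β i) p = 0) : m ≤ p.natDegree := by
  induction m generalizing p with
  | zero => exact Nat.zero_le _
  | succ m ih =>
    set v := β 0
    have hv : v ≠ 0 := hβ.ne_zero 0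
    have hy : LinearIndependent (fixedSubfield σ)
        (Fin.cons 1 fun i => v⁻¹ * β i.succ : Fin (m + 1) → L) := by
      have hscale : (Fin.cons 1 fun i => v⁻¹ * β i.succ : Fin (m + 1) → L) =
          LinearMap.mulLeft (fixedSubfield σ) v⁻¹ ∘ β := by
        ext i
        cases i using Fin.cases <;> simp [v, hv]
      rw [hscale]
      exact hβ.map' _ (LinearMap.ker_eq_bot.2 (mul_right_injective₀ (inv_ne_zero hv)))
    have hq : (twist σ v p).IsRoot 1 := by
      rw [IsRoot, ← linearizedEval_one, linearizedEval_twist, mul_one]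
      exact hroot 0
    obtain ⟨g, hg⟩ := dvd_iff_isRoot.2 hq
    have hg0 : g ≠ 0 := by
      rintro rfl
      exact twist_ne_zero hv hp (by simpa using hg)
    have hdeg : g.natDegree + 1 ≤ p.natDegree := calc
      g.natDegree + 1 = (twist σ v p).natDegree := by
        rw [hg, natDegree_mul (X_sub_C_ne_zero 1) hg0, natDegree_X_sub_C, add_comm]
      _ ≤ p.natDegree := natDegree_twist_le v p
    have hg' : twist σ v p = g * (X - 1) := by rw [hg, mul_comm, map_one]
    have hm := ih (linearIndependent_sub_of_finCons_one hy) hg0 fun i => by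
      rw [← linearizedEval_mul_X_sub_one, ← hg', linearizedEval_twist, mul_inv_cancel_left₀ hv]
      exact hroot i.succ
    omega

lemma linearizedEval_degreeLTEquiv_symm {t : ℕ} (c : Fin t → L) (x : L) :
    linearizedEval σ x ((degreeLTEquiv L t).symm c : L[X]) =
      ∑ j : Fin t, c j * (σ ^ (j : ℕ)) x := by
  have hc := congrFun ((degreeLTEquiv L t).apply_symm_apply c)
  rw [linearizedEval, lsum_apply, ← sum_fin _ (by simp) (mem_degreeLT.1 (Submodule.coe_mem _))]
  simp only [LinearMap.mulRight_apply]
  exact Finset.sum_congr rfl fun j _ => by rw [← hc j]; rfl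

end LinearizedPolynomial

theorem circulant_det_ne_zero_general {L : Type*} [Field L] {n : ℕ}
    (σ : L ≃+* L)
    (α : Module.Basis (Fin n) (fixedSubfield σ) L)
    (t : ℕ) (k : Fin t → Fin n) (hk : Function.Injective k) :
    (Matrix.of fun i j : Fin t => (σ ^ (j : ℕ)) (α (k i))).det ≠ 0 := by
  classical
  intro hdet
  obtain ⟨c, hc0, hc⟩ := Matrix.exists_mulVec_eq_zero_iff.2 hdet
  set p := ((degreeLTEquiv L t).symm c : L[X])
  have hp0 : p ≠ 0 := by simpa [p] using hc0
  have hroot : ∀ i, linearizedEval σ (α (k i)) p = 0 := fun i => by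
    rw [linearizedEval_degreeLTEquiv_symm]
    simpa [Matrix.mulVec, dotProduct, mul_comm] using congrFun hc i
  have hdeg : p.natDegree < t :=
    (natDegree_lt_iff_degree_lt hp0).2 (mem_degreeLT.1 (Submodule.coe_mem _))
  exact hdeg.not_ge
    (card_le_natDegree_of_linearIndependent (α.linearIndependent.comp k hk) hp0 hroot)

/-- **Circulant Lemma.** If `(α_0, …, α_{n-1})` is a basis of `L` over the fixed field
`L^σ` of an automorphism `σ` of order `n ≥ 1`, then for every `t ≤ n` and every injective
`k : Fin t → Fin n`, the `t × t` matrix with `(i,j)` entry `σ^j(α_{k i})` has nonzero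
determinant. -/
theorem circulant_det_ne_zero {L : Type*} [Field L] {n : ℕ} (hn : 1 ≤ n)
    (σ : L ≃+* L) (hord : orderOf σ = n)
    (α : Module.Basis (Fin n) (fixedSubfield σ) L)
    (t : ℕ) (ht : t ≤ n) (k : Fin t → Fin n) (hk : Function.Injective k) :
    (Matrix.of fun i j : Fin t => (σ ^ (j : ℕ)) (α (k i))).det ≠ 0 :=
  circulant_det_ne_zero_general σ α t k hk
end

section
/- For every natural number t with t ≤ n and every injective map k : Fin t → Fin n, the t vectors v_i ∈ L^n defined by v_i(j) = σ^j(α_{k(i)}) for j ∈ Fin n (i ∈ Fin t) are linearly independent over L. -/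
/-! The rows `(σ^j(α_i))_i` of the square matrix `(σ^j(α_i))_{j,i}` are linearly independent: a
relation `∑_j d_j σ^j(α_i) = 0` for all `i` extends from the basis to all of `L`, because each
`σ^j` is linear over the fixed field, and so is a relation among the distinct automorphisms
`σ^0, …, σ^(n-1)`, which Dedekind's lemma forbids. Hence the columns are independent too, and the
`v_i` are some of the columns. -/

namespace fixedSubfield

variable {L : Type*} [Field L] (σ : L ≃+* L)

theorem pow_apply_coe (m : ℕ) (c : fixedSubfield σ) : (σ ^ m) (c : L) = c := by
  rw [RingAut.coe_pow]
  exact Function.iterate_fixed c.2 m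

def powLinearMap (m : ℕ) : L →ₗ[fixedSubfield σ] L where
  toFun := (σ ^ m : L ≃+* L)
  map_add' := map_add (σ ^ m)
  map_smul' c x := by
    simp only [Subfield.smul_def, smul_eq_mul, map_mul, pow_apply_coe, RingHom.id_apply]

end fixedSubfield

theorem RingEquiv.linearIndependent_coe_pow {L : Type*} [Field L] (σ : L ≃+* L) :
    LinearIndependent L (fun j : Fin (orderOf σ) => ⇑(σ ^ (j : ℕ))) := by
  have hinj : Function.Injective fun j : Fin (orderOf σ) => (σ ^ (j : ℕ)).toMonoidHom :=
    fun a b hab => Fin.ext <| pow_injOn_Iio_orderOf a.2 b.2 <|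
      RingEquiv.ext fun x => DFunLike.congr_fun hab x
  exact (linearIndependent_monoidHom L L).comp _ hinj

theorem LinearIndependent.comp_basis {ι κ R S M N : Type*} [Semiring R] [Semiring S]
    [AddCommMonoid M] [Module R M] [AddCommMonoid N] [Module R N] [Module S N]
    [SMulCommClass R S N] (b : Module.Basis ι R M) {f : κ → M →ₗ[R] N}
    (hf : LinearIndependent S fun j => ⇑(f j)) :
    LinearIndependent S fun j => f j ∘ b := by
  have hf' : LinearIndependent S f := hf.of_comp (LinearMap.ltoFun R M N S)
  exact hf'.map_injOn (b.constr S).symm.toLinearMap (b.constr S).symm.injective.injOn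

theorem circulant_linearIndependent_general {L : Type*} [Field L] {n : ℕ}
    (σ : L ≃+* L) (hord : orderOf σ = n)
    (α : Module.Basis (Fin n) (fixedSubfield σ) L)
    (t : ℕ) (k : Fin t → Fin n) (hk : Function.Injective k) :
    LinearIndependent L
      (fun i : Fin t => fun j : Fin n => (σ ^ (j : ℕ)) (α (k i))) := by
  subst hord
  let M : Matrix (Fin (orderOf σ)) (Fin (orderOf σ)) L := .of fun j i => (σ ^ (j : ℕ)) (α i)
  have hrows : LinearIndependent L M.row := by
    exact σ.linearIndependent_coe_pow.comp_basis
      (f := fun j : Fin (orderOf σ) => fixedSubfield.powLinearMap σ j) α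
  exact (Matrix.linearIndependent_col_iff_row.2 hrows).comp k hk

/-- If `(α_0, …, α_{n-1})` is a basis of `L` over the fixed field `L^σ` of an automorphism
`σ` of order `n ≥ 1`, then for every `t ≤ n` and every injective `k : Fin t → Fin n`, the
vectors `v_i ∈ L^n` given by `v_i(j) = σ^j(α_{k i})` are linearly independent over `L`. -/
theorem circulant_linearIndependent {L : Type*} [Field L] {n : ℕ} (hn : 1 ≤ n)
    (σ : L ≃+* L) (hord : orderOf σ = n)
    (α : Module.Basis (Fin n) (fixedSubfield σ) L)
    (t : ℕ) (ht : t ≤ n) (k : Fin t → Fin n) (hk : Function.Injective k) :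
    LinearIndependent L
      (fun i : Fin t => fun j : Fin n => (σ ^ (j : ℕ)) (α (k i))) :=
  circulant_linearIndependent_general σ hord α t k hk
end

section
/- Let l ∈ Fin n and let l_1, …, l_s ∈ Fin n be pairwise distinct indices. Then the vector α_l^{[σ]} = (α_l, σ(α_l), …, σ^{n-1}(α_l)) ∈ L^n lies in the L-linear span of the vectors α_{l_1}^{[σ]}, …, α_{l_s}^{[σ]} if and only if l = l_i for some i ∈ {1, …, s}. -/
open Submodule Set

theorem LinearIndependent.mem_span_range_comp_iff {R M ι κ : Type*} [Ring R] [Nontrivial R]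
    [AddCommGroup M] [Module R M] {v : ι → M} (hv : LinearIndependent R v)
    (f : κ → ι) (i : ι) :
    v i ∈ span R (range (v ∘ f)) ↔ i ∈ range f := by
  rw [range_comp]
  exact ⟨fun h => by_contra fun hi => hv.notMem_span_image hi h,
    fun hi => subset_span (mem_image_of_mem v hi)⟩

theorem Module.Basis.linearIndependent_apply_iff {R S M N ι κ : Type*} [CommSemiring R]
    [Semiring S] [AddCommMonoid M] [Module R M] [AddCommMonoid N] [Module R N] [Module S N]
    [SMulCommClass R S N] (b : Basis ι R M) (f : κ → M →ₗ[R] N) :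
    LinearIndependent S (fun j i => f j (b i)) ↔ LinearIndependent S f :=
  (b.constr S).symm.toLinearMap.linearIndependent_iff_of_injOn (v := f)
    (b.constr S).symm.injective.injOn

theorem linearIndependent_coe_pow_fin_orderOf {L : Type*} [CommRing L] [IsDomain L]
    (σ : L ≃+* L) : LinearIndependent L (fun j : Fin (orderOf σ) => ⇑(σ ^ (j : ℕ))) := by
  refine (linearIndependent_monoidHom L L).comp
    (fun j : Fin (orderOf σ) => (σ ^ (j : ℕ)).toMonoidHom) fun j k hjk => ?_
  have : σ ^ (j : ℕ) = σ ^ (k : ℕ) := RingEquiv.ext fun x => DFunLike.congr_fun hjk x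
  exact Fin.ext (pow_injOn_Iio_orderOf j.2 k.2 this)

theorem pow_apply_of_mem_fixedSubfield {L : Type*} [Field L] {σ : L ≃+* L} {x : L}
    (hx : x ∈ fixedSubfield σ) (m : ℕ) : (σ ^ m) x = x :=
  (MulAction.stabilizer (L ≃+* L) x).pow_mem hx m

theorem linearIndependent_pow_apply_basis {L ι : Type*} [Field L] (σ : L ≃+* L)
    (b : Module.Basis ι (fixedSubfield σ) L) :
    LinearIndependent L (fun (j : Fin (orderOf σ)) i => (σ ^ (j : ℕ)) (b i)) := by
  let f : Fin (orderOf σ) → L →ₗ[fixedSubfield σ] L := fun j =>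
    (AlgEquiv.ofRingEquiv (f := σ ^ (j : ℕ))
      fun k => pow_apply_of_mem_fixedSubfield k.2 _).toLinearMap
  exact (b.linearIndependent_apply_iff f).mpr
    ((linearIndependent_coe_pow_fin_orderOf σ).of_comp (LinearMap.ltoFun _ _ _ L))

theorem mem_span_iff_eq_index_general {L : Type*} [Field L] {n : ℕ}
    (σ : L ≃+* L) (hord : orderOf σ = n)
    (α : Module.Basis (Fin n) (fixedSubfield σ) L)
    (l : Fin n) (s : ℕ) (ls : Fin s → Fin n) :
    ((fun j : Fin n => (σ ^ (j : ℕ)) (α l)) ∈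
        Submodule.span L
          (Set.range fun i : Fin s => fun j : Fin n => (σ ^ (j : ℕ)) (α (ls i))))
      ↔ ∃ i : Fin s, l = ls i := by
  subst hord
  have hcols : LinearIndependent L (fun i j : Fin (orderOf σ) => (σ ^ (j : ℕ)) (α i)) :=
    Matrix.linearIndependent_cols_iff_isUnit.mpr
      (Matrix.linearIndependent_rows_iff_isUnit.mp (linearIndependent_pow_apply_basis σ α))
  simpa only [Function.comp_def, mem_range, eq_comm] using hcols.mem_span_range_comp_iff ls l

/-- Let `(α_0, …, α_{n-1})` be a basis of `L` over the fixed field `L^σ` of an automorphism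
`σ` of order `n ≥ 1`, and for `γ ∈ L` let `γ^{[σ]} = (γ, σ(γ), …, σ^{n-1}(γ)) ∈ L^n`.
If `l ∈ Fin n` and `l_1, …, l_s ∈ Fin n` are pairwise distinct, then `α_l^{[σ]}` lies in
the `L`-span of `α_{l_1}^{[σ]}, …, α_{l_s}^{[σ]}` iff `l = l_i` for some `i`. -/
theorem mem_span_iff_eq_index {L : Type*} [Field L] {n : ℕ} (hn : 1 ≤ n)
    (σ : L ≃+* L) (hord : orderOf σ = n)
    (α : Module.Basis (Fin n) (fixedSubfield σ) L)
    (l : Fin n) (s : ℕ) (ls : Fin s → Fin n) (hls : Function.Injective ls) :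
    ((fun j : Fin n => (σ ^ (j : ℕ)) (α l)) ∈
        Submodule.span L
          (Set.range fun i : Fin s => fun j : Fin n => (σ ^ (j : ℕ)) (α (ls i))))
      ↔ ∃ i : Fin s, l = ls i :=
  mem_span_iff_eq_index_general σ hord α l s ls
end

section
/- Let β = α⁻¹·σ(α). The n × n matrix N over L whose (i,k) entry is the i-th σ-norm of σ^k(β), namely N(i,k) = ∏_{j=0}^{i-1} σ^{k+j}(β) (with the empty product equal to 1), for i, k ∈ Fin n, is invertible. -/
/-!
Telescoping gives `N_i(σ^k β) = (σ^k α)⁻¹ · σ^i(σ^k α)`, so the matrix is the product of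
`(σ^i(b_k))_{i,k}` with the invertible diagonal matrix `diag((b_k)⁻¹)`. The powers `σ^i`, `i < n`,
are distinct since they already differ on `α`, and they are `L^σ`-linear; by Dedekind's
independence of characters a relation `∑ᵢ vᵢ σ^i(b_k) = 0` for all `k` forces `v = 0`,
because `∑ᵢ vᵢ σ^i` then vanishes on a basis.
-/

open Finset

theorem Matrix.isUnit_of_algHom_apply_basis {K L M ι : Type*} [Field K] [Field L] [Field M]
    [Algebra K L] [Algebra K M] [Fintype ι] [DecidableEq ι]
    (b : Module.Basis ι K L) (τ : ι → L →ₐ[K] M) (hτ : Function.Injective τ) :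
    IsUnit (Matrix.of fun i k => τ i (b k)) := by
  rw [Matrix.isUnit_iff_isUnit_det, isUnit_iff_ne_zero]
  intro hdet
  obtain ⟨v, hv0, hv⟩ := Matrix.exists_vecMul_eq_zero_iff.mpr hdet
  have hsum : ∑ i, v i • (τ i).toLinearMap = 0 := b.ext fun k => by
    simpa [Matrix.vecMul, dotProduct] using congrFun hv k
  have hli := (linearIndependent_monoidHom L M).comp (fun i => (τ i : L →* M))
    fun i j h => hτ (AlgHom.ext fun x => DFunLike.congr_fun h x)
  refine hv0 (funext <| Fintype.linearIndependent_iff.mp hli v (funext fun x => ?_))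
  simpa using LinearMap.congr_fun hsum x

section

variable {L : Type*} [Field L]

theorem prod_range_pow_add_apply_inv_mul_apply (σ : L ≃+* L) {α : L} (hα : α ≠ 0) (k i : ℕ) :
    ∏ j ∈ range i, (σ ^ (k + j)) (α⁻¹ * σ α) = ((σ ^ k) α)⁻¹ * (σ ^ (k + i)) α := by
  have hσα (m : ℕ) : (σ ^ m) α ≠ 0 := (map_ne_zero _).mpr hα
  induction i with
  | zero => rw [prod_range_zero, add_zero, inv_mul_cancel₀ (hσα k)]
  | succ i ih =>
    have hstep : (σ ^ (k + i)) (α⁻¹ * σ α) = ((σ ^ (k + i)) α)⁻¹ * (σ ^ (k + i + 1)) α := by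
      rw [map_mul, map_inv₀, pow_succ]
      rfl
    rw [prod_range_succ, ih, hstep, ← add_assoc, mul_assoc, mul_inv_cancel_left₀ (hσα (k + i))]

def fixedSubfieldAlgEquiv (σ : L ≃+* L) : L ≃ₐ[fixedSubfield σ] L :=
  { σ with commutes' := fun c => c.2 }

theorem fixedSubfieldAlgEquiv_pow_apply (σ : L ≃+* L) (m : ℕ) (x : L) :
    (fixedSubfieldAlgEquiv σ ^ m) x = (σ ^ m) x := by
  induction m generalizing x with
  | zero => rfl
  | succ m ih => rw [pow_succ, pow_succ, AlgEquiv.mul_apply, ih]; rfl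

end

theorem norm_matrix_isUnit_general {L : Type*} [Field L] {n : ℕ}
    (σ : L ≃+* L) (α : L)
    (b : Module.Basis (Fin n) (fixedSubfield σ) L)
    (hb : ∀ i : Fin n, (b i : L) = (σ ^ (i : ℕ)) α) :
    IsUnit (Matrix.of fun i k : Fin n =>
      ∏ j ∈ Finset.range (i : ℕ), (σ ^ ((k : ℕ) + j)) (α⁻¹ * σ α)) := by
  set τ : Fin n → L →ₐ[fixedSubfield σ] L := fun i => (fixedSubfieldAlgEquiv σ ^ (i : ℕ) : _)
  have hτ : Function.Injective τ := fun i j hij => b.injective <| by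
    simpa [τ, hb, fixedSubfieldAlgEquiv_pow_apply] using DFunLike.congr_fun hij α
  have hdiag : IsUnit (Matrix.diagonal fun k => (b k)⁻¹) :=
    Matrix.isUnit_diagonal.mpr <| Pi.isUnit_iff.mpr fun k => (inv_ne_zero (b.ne_zero k)).isUnit
  convert (Matrix.isUnit_of_algHom_apply_basis b τ hτ).mul hdiag using 1
  ext i k
  have hα : α ≠ 0 := fun h => b.ne_zero k (by simp [hb, h])
  rw [Matrix.mul_diagonal, Matrix.of_apply, Matrix.of_apply,
    prod_range_pow_add_apply_inv_mul_apply σ hα, hb, mul_comm, add_comm, pow_add]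
  simp [τ, fixedSubfieldAlgEquiv_pow_apply]

/-- Let `α ∈ L` generate a normal basis `(α, σ(α), …, σ^{n-1}(α))` of `L` over the fixed
field `L^σ` of an automorphism `σ` of order `n ≥ 1`, and let `β = α⁻¹·σ(α)`. Then the
`n × n` matrix whose `(i,k)` entry is the `i`-th `σ`-norm
`N_i(σ^k(β)) = ∏_{j<i} σ^{k+j}(β)` is invertible. -/
theorem norm_matrix_isUnit {L : Type*} [Field L] {n : ℕ} (hn : 1 ≤ n)
    (σ : L ≃+* L) (hord : orderOf σ = n) (α : L)
    (b : Module.Basis (Fin n) (fixedSubfield σ) L)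
    (hb : ∀ i : Fin n, (b i : L) = (σ ^ (i : ℕ)) α) :
    IsUnit (Matrix.of fun i k : Fin n =>
      ∏ j ∈ Finset.range (i : ℕ), (σ ^ ((k : ℕ) + j)) (α⁻¹ * σ α)) :=
  norm_matrix_isUnit_general σ α b hb
end

section
/- For every subset T ⊆ Fin n and every s ∈ Fin n, the inclusion V_T ⊆ V_{{s}} holds if and only if s ∈ T. -/
/-- For a subset `T ⊆ Fin n`, the `L`-subspace of `L^n` of all `f` with
`∑ j, f j · σ^{k+j}(α) = 0` for every `k ∈ T`. -/
def VT {L : Type*} [Field L] {n : ℕ} (σ : L ≃+* L) (α : L) (T : Finset (Fin n)) :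
    Submodule L (Fin n → L) where
  carrier := {f | ∀ k ∈ T, ∑ j : Fin n, f j * (σ ^ ((k : ℕ) + (j : ℕ))) α = 0}
  add_mem' := by
    intro f g hf hg k hk
    simp only [Pi.add_apply, add_mul, Finset.sum_add_distrib]
    rw [hf k hk, hg k hk, add_zero]
  zero_mem' := by intro k hk; simp
  smul_mem' := by
    intro c f hf k hk
    simp only [Pi.smul_apply, smul_eq_mul, mul_assoc]
    rw [← Finset.mul_sum, hf k hk, mul_zero]

/-!
The equations cutting out `V_T` are the rows indexed by `T` of the Hankel matrix
`A = (σ^(k+j) α)_{k,j}`. This matrix is invertible: if `v A = 0`, the `L^σ`-linear map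
`x ↦ ∑ k, v k * σ^k x` vanishes on the normal basis, hence everywhere, and Dedekind's independence
of the distinct characters `σ^0, …, σ^(n-1)` forces `v = 0`. So for `s ∉ T` the vector `A⁻¹ e_s`
lies in `V_T` but not in `V_{s}`.
-/

section

open Matrix

variable {L : Type*} [Field L] {n : ℕ} (σ : L ≃+* L)

lemma pow_apply_smul (c : fixedSubfield σ) (x : L) (k : ℕ) :
    (σ ^ k) (c • x) = c • (σ ^ k) x := by
  rw [Subfield.smul_def, Subfield.smul_def, smul_eq_mul, smul_eq_mul, map_mul, RingAut.coe_pow,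
    Function.iterate_fixed c.2]

lemma sum_mul_pow_apply_eq_zero_of_basis {ι : Type*} [Fintype ι]
    (b : Module.Basis ι (fixedSubfield σ) L) (v : Fin n → L)
    (hv : ∀ i, ∑ k : Fin n, v k * (σ ^ (k : ℕ)) (b i) = 0) (x : L) :
    ∑ k : Fin n, v k * (σ ^ (k : ℕ)) x = 0 := by
  calc ∑ k : Fin n, v k * (σ ^ (k : ℕ)) x
      = ∑ k : Fin n, v k * (σ ^ (k : ℕ)) (∑ i, b.repr x i • b i) := by rw [b.sum_repr]
    _ = ∑ i, b.repr x i • ∑ k : Fin n, v k * (σ ^ (k : ℕ)) (b i) := by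
        simp only [map_sum, pow_apply_smul, Finset.smul_sum, Finset.mul_sum]
        rw [Finset.sum_comm]
        simp only [Subfield.smul_def, smul_eq_mul, mul_left_comm]
    _ = 0 := by simp only [hv, smul_zero, Finset.sum_const_zero]

lemma pow_injective_of_le_orderOf (hn : n ≤ orderOf σ) :
    Function.Injective fun k : Fin n => ((σ ^ (k : ℕ) : L ≃+* L) : L →* L) := by
  intro k k' h
  exact Fin.ext <| pow_injOn_Iio_orderOf (x := σ) (by simpa using k.isLt.trans_le hn)
    (by simpa using k'.isLt.trans_le hn)
    (show σ ^ (k : ℕ) = σ ^ (k' : ℕ) from RingEquiv.ext fun x => DFunLike.congr_fun h x)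

lemma eq_zero_of_sum_mul_pow_apply_eq_zero (hn : n ≤ orderOf σ) (v : Fin n → L)
    (hv : ∀ x, ∑ k : Fin n, v k * (σ ^ (k : ℕ)) x = 0) : v = 0 := by
  have hli := (linearIndependent_monoidHom L L).comp _ (pow_injective_of_le_orderOf σ hn)
  funext k
  refine Fintype.linearIndependent_iff.mp hli v (funext fun x => ?_) k
  simpa using hv x

def hankelMatrix (n : ℕ) (α : L) : Matrix (Fin n) (Fin n) L :=
  Matrix.of fun k j => (σ ^ ((k : ℕ) + (j : ℕ))) α

lemma mem_VT_iff_mulVec {α : L} {T : Finset (Fin n)} {f : Fin n → L} :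
    f ∈ VT σ α T ↔ ∀ k ∈ T, (hankelMatrix σ n α *ᵥ f) k = 0 := by
  simp only [Matrix.mulVec, dotProduct, hankelMatrix, Matrix.of_apply, mul_comm]
  rfl

lemma hankelMatrix_det_ne_zero (hn : n ≤ orderOf σ) {α : L}
    (b : Module.Basis (Fin n) (fixedSubfield σ) L) (hb : ∀ i : Fin n, (b i : L) = (σ ^ (i : ℕ)) α) :
    (hankelMatrix σ n α).det ≠ 0 := by
  intro hdet
  obtain ⟨v, hv, hvA⟩ := Matrix.exists_vecMul_eq_zero_iff.mpr hdet
  refine hv (eq_zero_of_sum_mul_pow_apply_eq_zero σ hn v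
    (sum_mul_pow_apply_eq_zero_of_basis σ b v fun i => ?_))
  simpa [hb, Matrix.vecMul, dotProduct, hankelMatrix, pow_add] using congrFun hvA i

lemma VT_le_VT_iff {α : L} (hA : IsUnit (hankelMatrix σ n α).det) (T T' : Finset (Fin n)) :
    VT σ α T ≤ VT σ α T' ↔ T' ⊆ T := by
  refine ⟨fun hle s hs => ?_, fun hsub f hf k hk => hf k (hsub hk)⟩
  by_contra hsT
  set f := (hankelMatrix σ n α)⁻¹ *ᵥ Pi.single s 1
  have hAf : hankelMatrix σ n α *ᵥ f = Pi.single s 1 := by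
    rw [Matrix.mulVec_mulVec, Matrix.mul_nonsing_inv _ hA, Matrix.one_mulVec]
  have hf : f ∈ VT σ α T := (mem_VT_iff_mulVec σ).2 fun k hk => by
    rw [hAf, Pi.single_eq_of_ne]
    rintro rfl
    exact hsT hk
  simpa [hAf] using (mem_VT_iff_mulVec σ).1 (hle hf) s hs

end

theorem VT_le_singleton_iff_general {L : Type*} [Field L] {n : ℕ}
    (σ : L ≃+* L) (hord : orderOf σ = n) (α : L)
    (b : Module.Basis (Fin n) (fixedSubfield σ) L)
    (hb : ∀ i : Fin n, (b i : L) = (σ ^ (i : ℕ)) α)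
    (T : Finset (Fin n)) (s : Fin n) :
    VT σ α T ≤ VT σ α {s} ↔ s ∈ T := by
  rw [← Finset.singleton_subset_iff]
  exact VT_le_VT_iff σ (hankelMatrix_det_ne_zero σ hord.ge b hb).isUnit T {s}

/-- Let `α ∈ L` generate a normal basis of `L` over the fixed field `L^σ` of an
automorphism `σ` of order `n ≥ 1`. For every subset `T ⊆ Fin n` and every `s ∈ Fin n`,
`V_T ⊆ V_{{s}}` iff `s ∈ T`. -/
theorem VT_le_singleton_iff {L : Type*} [Field L] {n : ℕ} (hn : 1 ≤ n)
    (σ : L ≃+* L) (hord : orderOf σ = n) (α : L)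
    (b : Module.Basis (Fin n) (fixedSubfield σ) L)
    (hb : ∀ i : Fin n, (b i : L) = (σ ^ (i : ℕ)) α)
    (T : Finset (Fin n)) (s : Fin n) :
    VT σ α T ≤ VT σ α {s} ↔ s ∈ T :=
  VT_le_singleton_iff_general σ hord α b hb T s
end

section
/- Let 2 ≤ δ ≤ n and r ∈ ℕ, and let C = { f : Fin n → L | ∀ i with 0 ≤ i ≤ δ−2, Σ_{j=0}^{n-1} f(j)·σ^{r+i+j}(α) = 0 } (a skew Reed–Solomon code of designed distance δ). Then every nonzero f ∈ C has Hamming weight (number of nonzero coordinates) at least δ. -/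
namespace fixedSubfield

variable {L : Type*} [Field L] (σ : L ≃+* L)

theorem pow_apply_eq_self {x : L} (hx : x ∈ fixedSubfield σ) : ∀ m : ℕ, (σ ^ m) x = x
  | 0 => rfl
  | m + 1 => by rw [pow_succ, RingAut.mul_apply, hx, pow_apply_eq_self hx m]

def powLinearEquiv (m : ℕ) : L ≃ₗ[fixedSubfield σ] L :=
  { (σ ^ m).toAddEquiv with
    map_smul' := fun k x => by
      change (σ ^ m) (k * x) = k * (σ ^ m) x
      rw [map_mul, pow_apply_eq_self σ k.2] }

variable {σ}

theorem linearIndependent_pow_apply {ι : Type*} {β : ι → L}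
    (hβ : LinearIndependent (fixedSubfield σ) β) (m : ℕ) :
    LinearIndependent (fixedSubfield σ) fun j => (σ ^ m) (β j) :=
  hβ.map' (powLinearEquiv σ m).toLinearMap (powLinearEquiv σ m).ker

theorem sum_sub_mul_pow_apply_eq_zero {ι : Type*} [Fintype ι] {β d : ι → L} {i : ℕ}
    (h : ∑ j, d j * (σ ^ i) (β j) = 0) (h_succ : ∑ j, d j * (σ ^ (i + 1)) (β j) = 0) :
    ∑ j, (σ (d j) - d j) * (σ ^ i) ((σ ^ 1) (β j)) = 0 := by
  have hσ : ∀ x, σ ((σ ^ i) x) = (σ ^ (i + 1)) x := fun x => by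
    rw [pow_succ', RingAut.mul_apply]
  have hshift : ∀ x, (σ ^ i) ((σ ^ 1) x) = (σ ^ (i + 1)) x := fun x => by
    rw [← RingAut.mul_apply, ← pow_add]
  have hσsum := congrArg σ h
  simp only [map_sum, map_mul, map_zero, hσ] at hσsum
  simp only [sub_mul, Finset.sum_sub_distrib, hshift, hσsum, h_succ, sub_zero]

theorem eq_zero_of_sum_mul_pow_apply_eq_zero_of_fin : ∀ {w : ℕ} {β : Fin w → L},
    LinearIndependent (fixedSubfield σ) β → ∀ {c : Fin w → L},
    (∀ i < w, ∑ j, c j * (σ ^ i) (β j) = 0) → c = 0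
  | 0, _, _, _, _ => Subsingleton.elim _ _
  | w + 1, β, hβ, c, hc => by
    have of_last_eq_zero : ∀ {β : Fin (w + 1) → L}, LinearIndependent (fixedSubfield σ) β →
        ∀ {c : Fin (w + 1) → L}, (∀ i < w, ∑ j, c j * (σ ^ i) (β j) = 0) →
        c (Fin.last w) = 0 → c = 0 := by
      intro β hβ c hc hlast
      have hinit : c ∘ Fin.castSucc = 0 :=
        eq_zero_of_sum_mul_pow_apply_eq_zero_of_fin (hβ.comp _ (Fin.castSucc_injective w))
          fun i hi => by simpa [Fin.sum_univ_castSucc, hlast] using hc i hi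
      funext j
      exact Fin.lastCases hlast (fun j => congrFun hinit j) j
    by_contra hne
    have hlast : c (Fin.last w) ≠ 0 := fun h =>
      hne (of_last_eq_zero hβ (fun i hi => hc i (by omega)) h)
    set d : Fin (w + 1) → L := fun j => c j / c (Fin.last w) with hd_def
    have hd : ∀ i < w + 1, ∑ j, d j * (σ ^ i) (β j) = 0 := fun i hi => by
      simp_rw [hd_def, div_mul_eq_mul_div, ← Finset.sum_div, hc i hi, zero_div]
    have hd_last : d (Fin.last w) = 1 := div_self hlast
    have hd_fixed : ∀ j, σ (d j) = d j := by
      have hsub := of_last_eq_zero (linearIndependent_pow_apply hβ 1)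
        (c := fun j => σ (d j) - d j)
        (fun i hi => sum_sub_mul_pow_apply_eq_zero (hd i (by omega)) (hd (i + 1) (by omega)))
        (by simp [hd_last])
      exact fun j => sub_eq_zero.mp (congrFun hsub j)
    have hrel : ∑ j, (⟨d j, hd_fixed j⟩ : fixedSubfield σ) • β j = 0 := by
      simpa [Subfield.smul_def] using hd 0 (by omega)
    have hd_last_zero : d (Fin.last w) = 0 :=
      congrArg Subtype.val (Fintype.linearIndependent_iff.mp hβ _ hrel (Fin.last w))
    exact one_ne_zero (hd_last.symm.trans hd_last_zero)

theorem eq_zero_of_sum_mul_pow_apply_eq_zero {ι : Type*} [Fintype ι] {β : ι → L}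
    (hβ : LinearIndependent (fixedSubfield σ) β) {c : ι → L}
    (hc : ∀ i < Fintype.card ι, ∑ j, c j * (σ ^ i) (β j) = 0) : c = 0 := by
  let e := (Fintype.equivFin ι).symm
  have hce : c ∘ e = 0 := eq_zero_of_sum_mul_pow_apply_eq_zero_of_fin (hβ.comp e e.injective)
    fun i hi => (e.sum_comp fun j => c j * (σ ^ i) (β j)).trans (hc i hi)
  funext j
  simpa using congrFun hce (e.symm j)

theorem lt_card_filter_ne_zero {ι : Type*} [Fintype ι] {β : ι → L}
    (hβ : LinearIndependent (fixedSubfield σ) β) {c : ι → L} [DecidablePred fun j => c j ≠ 0]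
    (hc0 : c ≠ 0) {m : ℕ} (hc : ∀ i < m, ∑ j, c j * (σ ^ i) (β j) = 0) :
    m < (Finset.univ.filter fun j => c j ≠ 0).card := by
  by_contra! hle
  set S := Finset.univ.filter fun j => c j ≠ 0
  have hcS : (fun j : S => c j) = 0 :=
    eq_zero_of_sum_mul_pow_apply_eq_zero (hβ.comp _ Subtype.val_injective) fun i hi => by
      rw [Fintype.card_coe] at hi
      rw [← hc i (by omega)]
      refine (Finset.sum_coe_sort S fun j => c j * (σ ^ i) (β j)).trans ?_
      exact Finset.sum_filter_of_ne fun j _ hj => left_ne_zero_of_mul hj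
  refine hc0 (funext fun j => by_contra fun hj => hj ?_)
  exact congrFun hcS ⟨j, Finset.mem_filter.mpr ⟨Finset.mem_univ j, hj⟩⟩

end fixedSubfield

open Classical

theorem skewRS_weight_lower_bound_general {L : Type*} [Field L] {n : ℕ}
    (σ : L ≃+* L) (α : L)
    (b : Module.Basis (Fin n) (fixedSubfield σ) L)
    (hb : ∀ i : Fin n, (b i : L) = (σ ^ (i : ℕ)) α)
    (δ : ℕ) (r : ℕ)
    (f : Fin n → L)
    (hf : ∀ i : ℕ, i ≤ δ - 2 → ∑ j : Fin n, f j * (σ ^ (r + i + (j : ℕ))) α = 0)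
    (hf0 : f ≠ 0) :
    δ ≤ (Finset.univ.filter fun j : Fin n => f j ≠ 0).card := by
  have hshift : ∀ i (j : Fin n), (σ ^ i) ((σ ^ r) (b j)) = (σ ^ (r + i + (j : ℕ))) α := by
    intro i j
    rw [hb, ← RingAut.mul_apply, ← RingAut.mul_apply, ← pow_add, ← pow_add, add_comm i r]
  have hweight := fixedSubfield.lt_card_filter_ne_zero
    (fixedSubfield.linearIndependent_pow_apply b.linearIndependent r) hf0
    (m := δ - 1) fun i hi => by simpa only [hshift] using hf i (by omega)
  omega

/-- Let `α ∈ L` generate a normal basis of `L` over the fixed field `L^σ` of an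
automorphism `σ` of order `n ≥ 1`, let `2 ≤ δ ≤ n`, `r ∈ ℕ`, and let `C` be the skew
Reed–Solomon code of all `f : Fin n → L` with `∑ j, f j · σ^{r+i+j}(α) = 0` for all
`0 ≤ i ≤ δ − 2`. Then every nonzero `f ∈ C` has Hamming weight at least `δ`. -/
theorem skewRS_weight_lower_bound {L : Type*} [Field L] {n : ℕ} (hn : 1 ≤ n)
    (σ : L ≃+* L) (hord : orderOf σ = n) (α : L)
    (b : Module.Basis (Fin n) (fixedSubfield σ) L)
    (hb : ∀ i : Fin n, (b i : L) = (σ ^ (i : ℕ)) α)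
    (δ : ℕ) (hδ2 : 2 ≤ δ) (hδn : δ ≤ n) (r : ℕ)
    (f : Fin n → L)
    (hf : ∀ i : ℕ, i ≤ δ - 2 → ∑ j : Fin n, f j * (σ ^ (r + i + (j : ℕ))) α = 0)
    (hf0 : f ≠ 0) :
    δ ≤ (Finset.univ.filter fun j : Fin n => f j ≠ 0).card :=
  skewRS_weight_lower_bound_general σ α b hb δ r f hf hf0
end

section
/- Let 2 ≤ δ ≤ n and r ∈ ℕ, and let C = { f : Fin n → L | ∀ i with 0 ≤ i ≤ δ−2, Σ_{j=0}^{n-1} f(j)·σ^{r+i+j}(α) = 0 }. Then C has L-dimension n − δ + 1, and the minimum Hamming weight over all nonzero elements of C equals δ; in particular C is an MDS code (its minimum distance attains the Singleton bound d = n − dim C + 1). -/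
open Classical

/-- The skew Reed–Solomon code of designed distance `δ` (with offset `r`): all
`f : Fin n → L` with `∑ j, f j · σ^{r+i+j}(α) = 0` for every `0 ≤ i ≤ δ − 2`. -/
def skewRSCode {L : Type*} [Field L] (n : ℕ) (σ : L ≃+* L) (α : L) (r δ : ℕ) :
    Submodule L (Fin n → L) where
  carrier := {f | ∀ i : ℕ, i ≤ δ - 2 → ∑ j : Fin n, f j * (σ ^ (r + i + (j : ℕ))) α = 0}
  add_mem' := by
    intro f g hf hg i hi
    simp only [Pi.add_apply, add_mul, Finset.sum_add_distrib]
    rw [hf i hi, hg i hi, add_zero]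
  zero_mem' := by intro i hi; simp
  smul_mem' := by
    intro c f hf i hi
    simp only [Pi.smul_apply, smul_eq_mul, mul_assoc]
    rw [← Finset.mul_sum, hf i hi, mul_zero]

open Finset Module

theorem Submodule.exists_ne_zero_hammingNorm_add_le {F ι : Type*} [Field F] [Fintype ι]
    [DecidableEq F] (C : Submodule F (ι → F)) {k : ℕ} (hk : k < finrank F C) :
    ∃ f ∈ C, f ≠ 0 ∧ hammingNorm f + k ≤ Fintype.card ι := by
  classical
  have hkι : k ≤ Fintype.card ι := by
    simpa using hk.le.trans C.finrank_le
  obtain ⟨T, -, hT⟩ := exists_subset_card_eq (s := (univ : Finset ι)) (by simpa)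
  let restrict : C →ₗ[F] (T → F) := LinearMap.funLeft F F ((↑) : T → ι) ∘ₗ C.subtype
  have hker : LinearMap.ker restrict ≠ ⊥ :=
    LinearMap.ker_ne_bot_of_finrank_lt <| by
      rwa [finrank_fintype_fun_eq_card, Fintype.card_coe, hT]
  obtain ⟨⟨f, hfC⟩, hf, hf0⟩ := Submodule.exists_mem_ne_zero_of_ne_bot hker
  have hfT : ∀ j ∈ T, f j = 0 := fun j hj => congrFun (LinearMap.mem_ker.mp hf) ⟨j, hj⟩
  refine ⟨f, hfC, fun h => hf0 (Subtype.ext h), ?_⟩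
  have hsupp : ({j | f j ≠ 0} : Finset ι) ⊆ Tᶜ := fun j hj =>
    mem_compl.mpr fun hjT => (mem_filter.mp hj).2 (hfT j hjT)
  have := card_le_card hsupp
  rw [card_compl, hT] at this
  unfold hammingNorm
  omega

theorem Submodule.finrank_le_card_add_one_sub_of_le_hammingNorm {F ι : Type*} [Field F]
    [Fintype ι] [DecidableEq F] (C : Submodule F (ι → F)) {d : ℕ}
    (hC : ∀ f ∈ C, f ≠ 0 → d ≤ hammingNorm f) : finrank F C ≤ Fintype.card ι + 1 - d := by
  rcases Nat.eq_zero_or_pos (finrank F C) with h | h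
  · simp [h]
  obtain ⟨f, hfC, hf0, hf⟩ := C.exists_ne_zero_hammingNorm_add_le (Nat.sub_lt h one_pos)
  have := hC f hfC hf0
  omega

namespace RingEquiv

variable {L : Type*} [Field L] (σ : L ≃+* L)

theorem pow_apply_of_mem_fixedSubfield {x : L} (hx : x ∈ fixedSubfield σ) (r : ℕ) :
    (σ ^ r) x = x := by
  induction r with
  | zero => rfl
  | succ r ih => rw [pow_succ]; exact (congrArg (σ ^ r) hx).trans ih

theorem pow_apply_pow_apply (i j : ℕ) (x : L) : (σ ^ i) ((σ ^ j) x) = (σ ^ (i + j)) x := by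
  rw [pow_add]
  rfl

theorem symm_pow_succ_apply (i : ℕ) (x : L) : σ.symm ((σ ^ (i + 1)) x) = (σ ^ i) x := by
  rw [pow_succ']
  exact σ.symm_apply_apply _

theorem linearIndependent_pow_apply {ι : Type*} {v : ι → L}
    (hv : LinearIndependent (fixedSubfield σ) v) (r : ℕ) :
    LinearIndependent (fixedSubfield σ) fun i => (σ ^ r) (v i) := by
  let f : L →ₗ[fixedSubfield σ] L :=
    { toFun := ⇑(σ ^ r)
      map_add' := map_add (σ ^ r)
      map_smul' := fun k x => by
        change (σ ^ r) (k * x) = k * (σ ^ r) x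
        rw [map_mul, pow_apply_of_mem_fixedSubfield σ k.2] }
  exact hv.map' f (LinearMap.ker_eq_bot_of_injective (σ ^ r).injective)

variable {ι : Type*} {β : ι → L}

theorem eq_zero_of_sum_mul_eq_zero_of_map_eq_self {s : Finset ι}
    (hβ : LinearIndepOn (fixedSubfield σ) β s) {d : ι → L} (hfix : ∀ j ∈ s, σ (d j) = d j)
    (hd : ∑ j ∈ s, d j * β j = 0) : ∀ j ∈ s, d j = 0 := by
  rw [LinearIndepOn, Fintype.linearIndependent_iff] at hβ
  intro j hj
  have := hβ (fun x => ⟨d x, hfix x x.2⟩)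
    (by simpa [Subfield.smul_def, sum_attach s fun j => d j * β j] using hd) ⟨j, hj⟩
  exact congrArg Subtype.val this

theorem sum_sub_symm_mul_pow_apply (s : Finset ι) (d : ι → L) (i : ℕ) :
    ∑ j ∈ s, (d j - σ.symm (d j)) * (σ ^ i) (β j) =
      ∑ j ∈ s, d j * (σ ^ i) (β j) - σ.symm (∑ j ∈ s, d j * (σ ^ (i + 1)) (β j)) := by
  simp only [sub_mul, Finset.sum_sub_distrib, map_sum, map_mul, symm_pow_succ_apply]

theorem eq_zero_of_forall_sum_mul_pow_apply_eq_zero {s : Finset ι}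
    (hβ : LinearIndepOn (fixedSubfield σ) β s) {c : ι → L}
    (hc : ∀ i < #s, ∑ j ∈ s, c j * (σ ^ i) (β j) = 0) : ∀ j ∈ s, c j = 0 := by
  classical
  induction s using Finset.induction_on generalizing c with
  | empty => simp
  | insert a t hat ih =>
    have hβt : LinearIndepOn (fixedSubfield σ) β t := hβ.mono (by simp)
    rw [card_insert_of_notMem hat] at hc
    have hca : c a = 0 := by
      by_contra hca
      set d : ι → L := fun j => (c a)⁻¹ * c j
      have hd : ∀ i < #t + 1, ∑ j ∈ insert a t, d j * (σ ^ i) (β j) = 0 := fun i hi => by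
        simp only [d, mul_assoc, ← mul_sum, hc i hi, mul_zero]
      have hda : d a = 1 := inv_mul_cancel₀ hca
      have hshift : ∀ j ∈ t, d j - σ.symm (d j) = 0 := by
        refine ih hβt fun i hi => ?_
        have := sum_sub_symm_mul_pow_apply σ (β := β) (insert a t) d i
        rw [hd i (by omega), hd (i + 1) (by omega), map_zero, sub_zero, sum_insert hat, hda,
          map_one, sub_self, zero_mul, zero_add] at this
        exact this
      have hfix : ∀ j ∈ insert a t, σ (d j) = d j := by
        simp only [forall_mem_insert, hda, map_one, true_and]
        intro j hj
        have := hshift j hj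
        rw [sub_eq_zero, eq_comm, σ.symm_apply_eq] at this
        exact this.symm
      have := eq_zero_of_sum_mul_eq_zero_of_map_eq_self σ hβ hfix
        (by simpa using hd 0 (by omega)) a (mem_insert_self a t)
      exact one_ne_zero (hda.symm.trans this)
    have hct := ih hβt fun i hi => by
      simpa [sum_insert hat, hca] using hc i (by omega)
    simpa [forall_mem_insert, hca] using hct

end RingEquiv

section SkewRS

variable {L : Type*} [Field L] {n : ℕ} {σ : L ≃+* L} {α : L}

theorem linearIndependent_pow_add_apply (b : Basis (Fin n) (fixedSubfield σ) L)
    (hb : ∀ i : Fin n, (b i : L) = (σ ^ (i : ℕ)) α) (r : ℕ) :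
    LinearIndependent (fixedSubfield σ) fun j : Fin n => (σ ^ (r + j)) α := by
  simpa only [hb, σ.pow_apply_pow_apply] using σ.linearIndependent_pow_apply b.linearIndependent r

variable {r δ : ℕ}

theorem le_finrank_skewRSCode_add_sub_one (hδ : 2 ≤ δ) :
    n ≤ finrank L (skewRSCode n σ α r δ) + (δ - 1) := by
  let H : (Fin n → L) →ₗ[L] Fin (δ - 1) → L := LinearMap.pi fun i =>
    Fintype.linearCombination L fun j : Fin n => (σ ^ (r + i + j)) α
  have hker : LinearMap.ker H ≤ skewRSCode n σ α r δ := fun f hf i hi => by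
    simpa [H, Fintype.linearCombination_apply] using
      congrFun (LinearMap.mem_ker.mp hf) ⟨i, by omega⟩
  have hrank := H.finrank_range_add_finrank_ker
  have hrange : finrank L (LinearMap.range H) ≤ δ - 1 := by
    simpa using (LinearMap.range H).finrank_le
  have := Submodule.finrank_mono hker
  simp only [finrank_fintype_fun_eq_card, Fintype.card_fin] at hrank
  omega

theorem le_hammingNorm_of_mem_skewRSCode
    (hβ : LinearIndependent (fixedSubfield σ) fun j : Fin n => (σ ^ (r + j)) α) (hδ : 2 ≤ δ)
    {f : Fin n → L} (hf : f ∈ skewRSCode n σ α r δ) (hf0 : f ≠ 0) : δ ≤ hammingNorm f := by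
  by_contra! hlt
  apply hf0
  have hsupp := σ.eq_zero_of_forall_sum_mul_pow_apply_eq_zero (s := {j | f j ≠ 0})
    (hβ.linearIndepOn _) (c := f) fun i hi => by
      have hi' : i ≤ δ - 2 := by unfold hammingNorm at hlt; omega
      rw [sum_filter_of_ne fun j _ h => left_ne_zero_of_mul h]
      simpa only [σ.pow_apply_pow_apply, add_left_comm i r, ← add_assoc] using hf i hi'
  funext j
  by_contra hj
  exact hj (hsupp j (mem_filter.mpr ⟨mem_univ j, hj⟩))

end SkewRS

theorem skewRS_MDS_general {L : Type*} [Field L] {n : ℕ}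
    (σ : L ≃+* L) (α : L)
    (b : Module.Basis (Fin n) (fixedSubfield σ) L)
    (hb : ∀ i : Fin n, (b i : L) = (σ ^ (i : ℕ)) α)
    (δ : ℕ) (hδ2 : 2 ≤ δ) (hδn : δ ≤ n) (r : ℕ) :
    Module.finrank L ↥(skewRSCode n σ α r δ) = n - δ + 1 ∧
    IsLeast {w : ℕ | ∃ f ∈ skewRSCode n σ α r δ, f ≠ 0 ∧
      w = (Finset.univ.filter fun j : Fin n => f j ≠ 0).card} δ ∧
    δ = n - Module.finrank L ↥(skewRSCode n σ α r δ) + 1 := by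
  set C := skewRSCode n σ α r δ
  have hweight : ∀ f ∈ C, f ≠ 0 → δ ≤ hammingNorm f := fun f hf hf0 =>
    le_hammingNorm_of_mem_skewRSCode (linearIndependent_pow_add_apply b hb r) hδ2 hf hf0
  have hdim : finrank L C = n - δ + 1 := by
    have hlower : n ≤ finrank L C + (δ - 1) := le_finrank_skewRSCode_add_sub_one hδ2
    have hsingleton := C.finrank_le_card_add_one_sub_of_le_hammingNorm hweight
    rw [Fintype.card_fin] at hsingleton
    omega
  obtain ⟨f, hfC, hf0, hf⟩ := C.exists_ne_zero_hammingNorm_add_le (k := n - δ) (by omega)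
  have hfδ : hammingNorm f = δ := by
    have := hweight f hfC hf0
    rw [Fintype.card_fin] at hf
    omega
  refine ⟨hdim, ⟨⟨f, hfC, hf0, hfδ.symm⟩, ?_⟩, by omega⟩
  rintro w ⟨g, hgC, hg0, rfl⟩
  exact hweight g hgC hg0

/-- Let `α ∈ L` generate a normal basis of `L` over the fixed field `L^σ` of an
automorphism `σ` of order `n ≥ 1`, and let `2 ≤ δ ≤ n`, `r ∈ ℕ`. Then the skew RS code
`C` of designed distance `δ` has `L`-dimension `n − δ + 1`, its minimum Hamming weight
over nonzero codewords equals `δ`, and it is MDS: `δ = n − dim C + 1`. -/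
theorem skewRS_MDS {L : Type*} [Field L] {n : ℕ} (hn : 1 ≤ n)
    (σ : L ≃+* L) (hord : orderOf σ = n) (α : L)
    (b : Module.Basis (Fin n) (fixedSubfield σ) L)
    (hb : ∀ i : Fin n, (b i : L) = (σ ^ (i : ℕ)) α)
    (δ : ℕ) (hδ2 : 2 ≤ δ) (hδn : δ ≤ n) (r : ℕ) :
    Module.finrank L ↥(skewRSCode n σ α r δ) = n - δ + 1 ∧
    IsLeast {w : ℕ | ∃ f ∈ skewRSCode n σ α r δ, f ≠ 0 ∧
      w = (Finset.univ.filter fun j : Fin n => f j ≠ 0).card} δ ∧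
    δ = n - Module.finrank L ↥(skewRSCode n σ α r δ) + 1 :=
  skewRS_MDS_general σ α b hb δ hδ2 hδn r
end

section
/- Let k : Fin ν → Fin n be injective (with ν ≤ n) and let e : Fin ν → L. Then the ν × ν matrix M over L with entries M(j,i) = σ^{k(j)+i}(α) (j, i ∈ Fin ν) is invertible; consequently, setting s_i = Σ_{j} e(j)·σ^{k(j)+i}(α) for i ∈ Fin ν, the vector e is the unique x : Fin ν → L satisfying Σ_{j} x(j)·σ^{k(j)+i}(α) = s_i for all i ∈ Fin ν. -/
open Finset

section
variable {L : Type*} [Field L] (σ : L ≃+* L) {ι : Type*} [Fintype ι]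

lemma symm_sum_mul_pow_succ_apply (c β : ι → L) (i : ℕ) :
    σ.symm (∑ j, c j * (σ ^ (i + 1)) (β j)) = ∑ j, σ.symm (c j) * (σ ^ i) (β j) := by
  simp only [map_sum, map_mul, pow_succ', RingAut.mul_apply, RingEquiv.symm_apply_apply]

lemma sum_sub_symm_mul_pow_apply_eq_zero {c β : ι → L} {m : ℕ}
    (hc : ∀ i < m + 1, ∑ j, c j * (σ ^ i) (β j) = 0) :
    ∀ i < m, ∑ j, (c j - σ.symm (c j)) * (σ ^ i) (β j) = 0 := by
  intro i hi
  have hshift := symm_sum_mul_pow_succ_apply σ c β i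
  rw [hc (i + 1) (by omega), map_zero] at hshift
  simp only [sub_mul, sum_sub_distrib, hc i (by omega), ← hshift, sub_zero]

lemma eq_zero_of_sum_mul_eq_zero {β : ι → L} (hβ : LinearIndependent (fixedSubfield σ) β)
    {c : ι → L} (hfix : ∀ j, c j ∈ fixedSubfield σ) (hc : ∑ j, c j * β j = 0) : c = 0 := by
  funext j
  exact congrArg Subtype.val
    (Fintype.linearIndependent_iff.mp hβ (fun j => ⟨c j, hfix j⟩) hc j)

open scoped Classical in
lemma forall_mem_fixedSubfield_of_sum_mul_pow_apply_eq_zero {β : ι → L} {m : ℕ}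
    (ih : ∀ c : ι → L, #{j | c j ≠ 0} ≤ m → (∀ i < m, ∑ j, c j * (σ ^ i) (β j) = 0) → c = 0)
    {c : ι → L} {j₀ : ι} (hj₀ : c j₀ = 1) (hcard : #{j | c j ≠ 0} ≤ m + 1)
    (hc : ∀ i < m + 1, ∑ j, c j * (σ ^ i) (β j) = 0) :
    ∀ j, c j ∈ fixedSubfield σ := by
  have hsupp : ({j | c j - σ.symm (c j) ≠ 0} : Finset ι) ⊆
      ({j | c j ≠ 0} : Finset ι).erase j₀ := by
    intro j hj
    simp only [mem_filter, mem_univ, true_and, mem_erase, ne_eq] at hj ⊢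
    refine ⟨?_, ?_⟩
    · rintro rfl; simp [hj₀] at hj
    · rintro h; simp [h] at hj
  have hρ := ih _ ((card_le_card hsupp).trans (by
      rw [card_erase_of_mem (by simp [hj₀])]; omega))
    (sum_sub_symm_mul_pow_apply_eq_zero σ hc)
  intro j
  exact σ.eq_symm_apply.mp (sub_eq_zero.mp (congrFun hρ j))

open scoped Classical in
theorem eq_zero_of_sum_mul_pow_apply_eq_zero_s10 {β : ι → L}
    (hβ : LinearIndependent (fixedSubfield σ) β) (m : ℕ) {c : ι → L}
    (hcard : #{j | c j ≠ 0} ≤ m) (hc : ∀ i < m, ∑ j, c j * (σ ^ i) (β j) = 0) : c = 0 := by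
  induction m generalizing c with
  | zero =>
    funext j
    simpa using filter_eq_empty_iff.mp (card_eq_zero.mp (Nat.le_zero.mp hcard)) (mem_univ j)
  | succ m ih =>
    by_contra hne
    obtain ⟨j₀, hj₀ : c j₀ ≠ 0⟩ := Function.ne_iff.mp hne
    set c' : ι → L := fun j => (c j₀)⁻¹ * c j
    have hc'j₀ : c' j₀ = 1 := inv_mul_cancel₀ hj₀
    have hcard' : #{j | c' j ≠ 0} ≤ m + 1 := by simpa [c', hj₀] using hcard
    have hc' : ∀ i < m + 1, ∑ j, c' j * (σ ^ i) (β j) = 0 := fun i hi => by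
      simp only [c', mul_assoc, ← mul_sum, hc i hi, mul_zero]
    have hfix := forall_mem_fixedSubfield_of_sum_mul_pow_apply_eq_zero σ (fun _ => ih) hc'j₀
      hcard' hc'
    have hc'0 := eq_zero_of_sum_mul_eq_zero σ hβ hfix (by simpa using hc' 0 (by omega))
    simpa [hc'j₀] using congrFun hc'0 j₀

theorem isUnit_matrix_pow_apply_of_linearIndependent {ν : ℕ} {β : Fin ν → L}
    (hβ : LinearIndependent (fixedSubfield σ) β) :
    IsUnit (Matrix.of fun j i : Fin ν => (σ ^ (i : ℕ)) (β j)) := by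
  classical
  rw [Matrix.isUnit_iff_isUnit_det, isUnit_iff_ne_zero, Ne, ← Matrix.exists_vecMul_eq_zero_iff]
  rintro ⟨v, hv, hvM⟩
  exact hv <| eq_zero_of_sum_mul_pow_apply_eq_zero_s10 σ hβ ν ((card_filter_le _ _).trans (by simp))
    fun i hi => congrFun hvM ⟨i, hi⟩

end

theorem error_values_unique_general {L : Type*} [Field L] {n : ℕ}
    (σ : L ≃+* L) (α : L)
    (b : Module.Basis (Fin n) (fixedSubfield σ) L)
    (hb : ∀ i : Fin n, (b i : L) = (σ ^ (i : ℕ)) α)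
    (ν : ℕ) (k : Fin ν → Fin n) (hk : Function.Injective k)
    (e : Fin ν → L) :
    IsUnit (Matrix.of fun j i : Fin ν => (σ ^ ((k j : ℕ) + (i : ℕ))) α) ∧
    ∀ x : Fin ν → L,
      (∀ i : Fin ν, ∑ j : Fin ν, x j * (σ ^ ((k j : ℕ) + (i : ℕ))) α =
        ∑ j : Fin ν, e j * (σ ^ ((k j : ℕ) + (i : ℕ))) α) ↔ x = e := by
  have hβ : LinearIndependent (fixedSubfield σ) fun j => (σ ^ (k j : ℕ)) α := by
    simpa only [Function.comp_def, hb] using b.linearIndependent.comp k hk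
  have hM : Matrix.of (fun j i : Fin ν => (σ ^ ((k j : ℕ) + (i : ℕ))) α) =
      Matrix.of fun j i : Fin ν => (σ ^ (i : ℕ)) ((σ ^ (k j : ℕ)) α) := by
    simp_rw [add_comm (k _ : ℕ), pow_add, RingAut.mul_apply]
  have hunit := hM ▸ isUnit_matrix_pow_apply_of_linearIndependent σ hβ
  refine ⟨hunit, fun x => ⟨fun h => ?_, by rintro rfl _; rfl⟩⟩
  exact Matrix.vecMul_injective_iff_isUnit.mpr hunit (funext h)

/-- Let `α ∈ L` generate a normal basis of `L` over the fixed field `L^σ` of an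
automorphism `σ` of order `n ≥ 1`. Let `k : Fin ν → Fin n` be injective (`ν ≤ n`) and
`e : Fin ν → L`. Then the `ν × ν` matrix with entries `σ^{k(j)+i}(α)` is invertible, and
`e` is the unique solution `x` of the syndrome equations
`∑ j, x j · σ^{k(j)+i}(α) = s_i := ∑ j, e j · σ^{k(j)+i}(α)`. -/
theorem error_values_unique {L : Type*} [Field L] {n : ℕ} (hn : 1 ≤ n)
    (σ : L ≃+* L) (hord : orderOf σ = n) (α : L)
    (b : Module.Basis (Fin n) (fixedSubfield σ) L)
    (hb : ∀ i : Fin n, (b i : L) = (σ ^ (i : ℕ)) α)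
    (ν : ℕ) (hν : ν ≤ n) (k : Fin ν → Fin n) (hk : Function.Injective k)
    (e : Fin ν → L) :
    IsUnit (Matrix.of fun j i : Fin ν => (σ ^ ((k j : ℕ) + (i : ℕ))) α) ∧
    ∀ x : Fin ν → L,
      (∀ i : Fin ν, ∑ j : Fin ν, x j * (σ ^ ((k j : ℕ) + (i : ℕ))) α =
        ∑ j : Fin ν, e j * (σ ^ ((k j : ℕ) + (i : ℕ))) α) ↔ x = e :=
  error_values_unique_general σ α b hb ν k hk e
end

section
/- Let e : Fin ν → L and for r ∈ ℕ let E^r be the ν × r matrix over L with entries E^r(i,j) = (σ⁻¹)^j(e(i)) (i ∈ Fin ν, j ∈ Fin r). Suppose μ ∈ ℕ satisfies rank(E^μ) = μ and rank(E^{μ+1}) = μ. Then rank(E^r) = μ for every r ≥ μ; in particular μ ≤ ν. -/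
/-!
Let `S r` be the span of the first `r` columns. Applying `σ⁻¹` entrywise is a `σ⁻¹`-semilinear
map sending column `j` to column `j + 1`, so `S (r + 1) = L ∙ e + σ⁻¹(S r)`. Hence
`S (μ + 1) = S μ` propagates to `S r = S μ` for all `r ≥ μ`, while `rank Eʳ = dim S r`.
-/

open Submodule Module

section InitialSpan

variable {R M : Type*} [Semiring R] [AddCommMonoid M] [Module R M]

variable (R) in
def initialSpan (c : ℕ → M) (r : ℕ) : Submodule R M :=
  span R (Set.range fun j : Fin r => c j)

theorem initialSpan_mono (c : ℕ → M) : Monotone (initialSpan R c) := by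
  intro r s hrs
  refine span_mono ?_
  rintro _ ⟨j, rfl⟩
  exact ⟨Fin.castLE hrs j, rfl⟩

variable {τ : R →+* R} [RingHomSurjective τ] {f : M →ₛₗ[τ] M} {c : ℕ → M}

theorem initialSpan_succ_eq_sup_map (hc : ∀ j, f (c j) = c (j + 1)) (r : ℕ) :
    initialSpan R c (r + 1) = (R ∙ c 0) ⊔ (initialSpan R c r).map f := by
  rw [initialSpan, initialSpan, Fin.range_fin_succ, span_insert, map_span, ← Set.range_comp]
  congr 3
  funext j
  exact (hc j).symm

theorem initialSpan_eq_of_succ_eq (hc : ∀ j, f (c j) = c (j + 1)) {k : ℕ}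
    (hk : initialSpan R c (k + 1) = initialSpan R c k) :
    ∀ r, k ≤ r → initialSpan R c r = initialSpan R c k := by
  intro r hr
  induction r, hr using Nat.le_induction with
  | base => rfl
  | succ r _ ih => rw [initialSpan_succ_eq_sup_map hc, ih, ← initialSpan_succ_eq_sup_map hc, hk]

end InitialSpan

theorem Matrix.rank_of_cols_eq_finrank_initialSpan {R ι : Type*} [CommRing R] [Fintype ι]
    (c : ℕ → ι → R) (r : ℕ) :
    (Matrix.of fun (i : ι) (j : Fin r) => c j i).rank = finrank R (initialSpan R c r) := by
  rw [Matrix.rank_eq_finrank_span_cols]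
  rfl

def RingHom.compLeftₛₗ {R : Type*} [Semiring R] (τ : R →+* R) (ι : Type*) :
    (ι → R) →ₛₗ[τ] (ι → R) where
  toFun v := τ ∘ v
  map_add' v w := by ext; simp
  map_smul' a v := by ext; simp

theorem rank_E_stabilizes_general {L : Type*} [Field L]
    (σ : L ≃+* L)
    (ν : ℕ) (e : Fin ν → L) (μ : ℕ)
    (h1 : (Matrix.of fun (i : Fin ν) (j : Fin μ) => (σ⁻¹ ^ (j : ℕ)) (e i)).rank = μ)
    (h2 : (Matrix.of fun (i : Fin ν) (j : Fin (μ + 1)) => (σ⁻¹ ^ (j : ℕ)) (e i)).rank = μ) :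
    (∀ r : ℕ, μ ≤ r →
      (Matrix.of fun (i : Fin ν) (j : Fin r) => (σ⁻¹ ^ (j : ℕ)) (e i)).rank = μ) ∧
    μ ≤ ν := by
  set c : ℕ → Fin ν → L := fun j i => (σ⁻¹ ^ j) (e i)
  have hrank (r : ℕ) : (Matrix.of fun (i : Fin ν) (j : Fin r) => c j i).rank =
      finrank L (initialSpan L c r) := Matrix.rank_of_cols_eq_finrank_initialSpan c r
  have hshift (j : ℕ) :
      RingHom.compLeftₛₗ ((σ⁻¹ : L ≃+* L) : L →+* L) (Fin ν) (c j) = c (j + 1) := by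
    ext i
    change σ⁻¹ ((σ⁻¹ ^ j) (e i)) = (σ⁻¹ ^ (j + 1)) (e i)
    rw [pow_succ']; rfl
  have hstep : initialSpan L c (μ + 1) = initialSpan L c μ :=
    (eq_of_le_of_finrank_eq (initialSpan_mono c μ.le_succ)
      (by rw [← hrank, ← hrank, h1, h2])).symm
  refine ⟨fun r hr => ?_, ?_⟩
  · rw [hrank, initialSpan_eq_of_succ_eq hshift hstep r hr, ← hrank, h1]
  · exact h1 ▸ Matrix.rank_le_height (Matrix.of fun (i : Fin ν) (j : Fin μ) => c j i)

/-- Let `σ` be an automorphism of a field `L` of finite order `n ≥ 1`, `e : Fin ν → L`,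
and for `r ∈ ℕ` let `Eʳ` be the `ν × r` matrix with entries `(σ⁻¹)^j(e i)`. If
`rank(E^μ) = μ` and `rank(E^{μ+1}) = μ`, then `rank(Eʳ) = μ` for every `r ≥ μ`;
in particular `μ ≤ ν`. -/
theorem rank_E_stabilizes {L : Type*} [Field L] {n : ℕ} (hn : 1 ≤ n)
    (σ : L ≃+* L) (hord : orderOf σ = n)
    (ν : ℕ) (e : Fin ν → L) (μ : ℕ)
    (h1 : (Matrix.of fun (i : Fin ν) (j : Fin μ) => (σ⁻¹ ^ (j : ℕ)) (e i)).rank = μ)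
    (h2 : (Matrix.of fun (i : Fin ν) (j : Fin (μ + 1)) => (σ⁻¹ ^ (j : ℕ)) (e i)).rank = μ) :
    (∀ r : ℕ, μ ≤ r →
      (Matrix.of fun (i : Fin ν) (j : Fin r) => (σ⁻¹ ^ (j : ℕ)) (e i)).rank = μ) ∧
    μ ≤ ν :=
  rank_E_stabilizes_general σ ν e μ h1 h2
end
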